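/- arXiv:1601.01981 — 3 statements merged into one kernel-verified Lean document; each statement's English description precedes it below -/
import Mathlib

section
/- Under the stated clustered-model assumptions, the residual projection matrix factors as (I − H_X) = (I − H_{R̈})(I − H_{S̈})(I − H_T), where X = [R S T], S̈ = (I−H_T)S, and R̈ = (I−H_{S̈})(I−H_T)R. -/
open Matrix MeasureTheory

abbrev Obs {m : ℕ} (n : Fin m → ℕ) : Type := (i : Fin m) × Fin (n i)

/-- The rows of a stacked matrix belonging to cluster `i`. -/
def cRows {m : ℕ} {n : Fin m → ℕ} {c : Type*} (i : Fin m)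
    (M : Matrix (Obs n) c ℝ) : Matrix (Fin (n i)) c ℝ :=
  Matrix.of fun j k => M ⟨i, j⟩ k

/-- The entries of a stacked vector belonging to cluster `i`. -/
def cVec {m : ℕ} {n : Fin m → ℕ} (i : Fin m) (v : Obs n → ℝ) : Fin (n i) → ℝ :=
  fun j => v ⟨i, j⟩

/-- `M_Z = (Zᵀ W Z)⁻¹`. -/
noncomputable def Mmat {Ω q : Type*} [Fintype Ω] [Fintype q] [DecidableEq q]
    (W : Matrix Ω Ω ℝ) (Z : Matrix Ω q ℝ) : Matrix q q ℝ :=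
  (Zᵀ * W * Z)⁻¹

/-- `H_Z = Z M_Z Zᵀ W`. -/
noncomputable def Hmat {Ω q : Type*} [Fintype Ω] [Fintype q] [DecidableEq q]
    (W : Matrix Ω Ω ℝ) (Z : Matrix Ω q ℝ) : Matrix Ω Ω ℝ :=
  Z * Mmat W Z * Zᵀ * W

/-! The Frisch–Waugh–Lovell argument. For a two-block design `[A B]`, the column operation
`A ↦ Ä = (1 - H_B) A = A - B K` leaves the column space, hence the projection, unchanged and
makes the two blocks `W`-orthogonal, so `H_[A B] = H_Ä + H_B` with `H_Ä H_B = 0`, that is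
`1 - H_[A B] = (1 - H_Ä)(1 - H_B)`. Applying this to `[R [S T]]` and then to `[S T]` gives the
three factors, and the second application also identifies the absorbed block
`(1 - H_[S T]) R` of the first with `R̈`. -/

lemma one_sub_add_eq_mul_of_mul_eq_zero {R : Type*} [Ring R] {p q : R} (h : p * q = 0) :
    1 - (p + q) = (1 - p) * (1 - q) := by
  rw [mul_sub, sub_mul, sub_mul, h, one_mul, mul_one, one_mul]
  abel

section Gram

variable {Ω a : Type*} [Fintype Ω] [Fintype a] [DecidableEq a] {W : Matrix Ω Ω ℝ}

lemma injective_mulVec_of_isUnit_det_gram {Z : Matrix Ω a ℝ}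
    (hZ : IsUnit (Zᵀ * W * Z).det) : Function.Injective Z.mulVec := by
  have h := Matrix.mulVec_injective_iff_isUnit.2 ((Matrix.isUnit_iff_isUnit_det _).2 hZ)
  refine Function.Injective.of_comp (f := (Zᵀ * W).mulVec) ?_
  simpa only [Function.comp_def, Matrix.mulVec_mulVec] using h

lemma isUnit_det_gram (hW : W.PosDef) {Z : Matrix Ω a ℝ} (hZ : Function.Injective Z.mulVec) :
    IsUnit (Zᵀ * W * Z).det :=
  (Matrix.isUnit_iff_isUnit_det _).1 (hW.conjTranspose_mul_mul_same hZ).isUnit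

end Gram

section ColumnBlocks

variable {𝕜 Ω a b : Type*} [Ring 𝕜] [Fintype a] [Fintype b]

lemma injective_mulVec_fromCols_right {A : Matrix Ω a 𝕜} {B : Matrix Ω b 𝕜}
    (h : Function.Injective (fromCols A B).mulVec) : Function.Injective B.mulVec := by
  intro v w hvw
  have hsum := @h (Sum.elim 0 v) (Sum.elim 0 w) (by simp [hvw])
  simpa using congrArg (fun u => u ∘ Sum.inr) hsum

lemma injective_mulVec_sub_mul {A : Matrix Ω a 𝕜} {B : Matrix Ω b 𝕜}
    (h : Function.Injective (fromCols A B).mulVec) (K : Matrix b a 𝕜) :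
    Function.Injective (A - B * K).mulVec := by
  intro v w hvw
  have hsum := @h (Sum.elim v (-(K *ᵥ v))) (Sum.elim w (-(K *ᵥ w))) <| by
    simpa [Matrix.sub_mulVec, Matrix.mulVec_neg, ← Matrix.mulVec_mulVec, ← sub_eq_add_neg]
      using hvw
  simpa using congrArg (fun u => u ∘ Sum.inl) hsum

end ColumnBlocks

section Projection

variable {Ω a b : Type*} [Fintype Ω] [Fintype a] [DecidableEq a] {W : Matrix Ω Ω ℝ}

lemma transpose_mul_mul_Hmat {Z : Matrix Ω a ℝ} (hZ : IsUnit (Zᵀ * W * Z).det) :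
    Zᵀ * W * Hmat W Z = Zᵀ * W := by
  rw [show Zᵀ * W * Hmat W Z = Zᵀ * W * Z * ((Zᵀ * W * Z)⁻¹ * (Zᵀ * W)) by
    simp only [Hmat, Mmat, Matrix.mul_assoc], Matrix.mul_nonsing_inv_cancel_left _ _ hZ]

lemma Hmat_mul_eq_zero {Z : Matrix Ω a ℝ} {Y : Matrix Ω b ℝ} (h : Zᵀ * W * Y = 0) :
    Hmat W Z * Y = 0 := by
  rw [show Hmat W Z * Y = Z * (Mmat W Z * (Zᵀ * W * Y)) by
    simp only [Hmat, Matrix.mul_assoc], h, Matrix.mul_zero, Matrix.mul_zero]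

lemma Hmat_mul_Hmat_eq_zero [Fintype b] [DecidableEq b] {Z : Matrix Ω a ℝ} {Y : Matrix Ω b ℝ}
    (h : Zᵀ * W * Y = 0) : Hmat W Z * Hmat W Y = 0 := by
  rw [show Hmat W Z * Hmat W Y = Hmat W Z * Y * (Mmat W Y * Yᵀ * W) by
    simp only [Hmat, Matrix.mul_assoc], Hmat_mul_eq_zero h, Matrix.zero_mul]

lemma Hmat_mul_of_isUnit_det (Z : Matrix Ω a ℝ) {C : Matrix a a ℝ} (hC : IsUnit C.det) :
    Hmat W (Z * C) = Hmat W Z := by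
  have hCt : IsUnit Cᵀ.det := by rwa [Matrix.det_transpose]
  have hgram : (Z * C)ᵀ * W * (Z * C) = Cᵀ * (Zᵀ * W * Z) * C := by
    simp only [Matrix.transpose_mul, Matrix.mul_assoc]
  -- `Matrix.mul_inv_rev` holds also for singular factors, whose junk inverse is `0`.
  rw [Hmat, Mmat, hgram, Matrix.mul_inv_rev, Matrix.mul_inv_rev, Matrix.transpose_mul]
  simp only [Hmat, Mmat, Matrix.mul_assoc, Matrix.mul_nonsing_inv_cancel_left _ _ hC,
    Matrix.nonsing_inv_mul_cancel_left _ _ hCt]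

lemma Hmat_fromCols_of_orthogonal [Fintype b] [DecidableEq b]
    {A : Matrix Ω a ℝ} {B : Matrix Ω b ℝ}
    (hA : IsUnit (Aᵀ * W * A).det) (hB : IsUnit (Bᵀ * W * B).det)
    (hAB : Aᵀ * W * B = 0) (hBA : Bᵀ * W * A = 0) :
    Hmat W (fromCols A B) = Hmat W A + Hmat W B := by
  have hgram : (fromCols A B)ᵀ * W * fromCols A B
      = fromBlocks (Aᵀ * W * A) 0 0 (Bᵀ * W * B) := by
    rw [transpose_fromCols, fromRows_mul, fromRows_mul_fromCols, hAB, hBA]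
  have hinv : (fromBlocks (Aᵀ * W * A) 0 0 (Bᵀ * W * B))⁻¹
      = fromBlocks (Aᵀ * W * A)⁻¹ 0 0 (Bᵀ * W * B)⁻¹ := by
    rw [inv_fromBlocks_zero₁₂_of_isUnit_iff _ _ _ ?_]
    · simp
    · simp only [← Matrix.isUnit_iff_isUnit_det] at hA hB
      exact iff_of_true hA hB
  rw [Hmat, Mmat, hgram, hinv]
  simp [Hmat, Mmat, fromCols_mul_fromBlocks, fromCols_mul_fromRows, transpose_fromCols,
    Matrix.add_mul, Matrix.mul_assoc]

end Projection

theorem one_sub_Hmat_fromCols {Ω a b : Type*} [Fintype Ω] [DecidableEq Ω] [Fintype a]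
    [DecidableEq a] [Fintype b] [DecidableEq b] {W : Matrix Ω Ω ℝ} (hW : W.PosDef)
    {A : Matrix Ω a ℝ} {B : Matrix Ω b ℝ} (hinj : Function.Injective (fromCols A B).mulVec) :
    1 - Hmat W (fromCols A B) = (1 - Hmat W ((1 - Hmat W B) * A)) * (1 - Hmat W B) := by
  set K := Mmat W B * Bᵀ * W * A
  have hAd : (1 - Hmat W B) * A = A - B * K := by
    simp only [K, Hmat, Matrix.sub_mul, Matrix.one_mul, Matrix.mul_assoc]
  have hB := isUnit_det_gram hW (injective_mulVec_fromCols_right hinj)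
  have hBAd : Bᵀ * W * ((1 - Hmat W B) * A) = 0 := by
    rw [← Matrix.mul_assoc, Matrix.mul_sub, Matrix.mul_one, transpose_mul_mul_Hmat hB, sub_self,
      Matrix.zero_mul]
  have hAdB : ((1 - Hmat W B) * A)ᵀ * W * B = 0 := by
    have hWt : Wᵀ = W := by simpa using hW.isHermitian.eq
    simpa [Matrix.transpose_mul, hWt, Matrix.mul_assoc] using congrArg Matrix.transpose hBAd
  have hC : IsUnit (fromBlocks 1 0 (-K) 1 : Matrix (a ⊕ b) (a ⊕ b) ℝ).det := by simp
  have hcols : fromCols A B * (fromBlocks 1 0 (-K) 1 : Matrix (a ⊕ b) (a ⊕ b) ℝ)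
      = fromCols ((1 - Hmat W B) * A) B := by
    rw [fromCols_mul_fromBlocks, hAd]
    simp [sub_eq_add_neg]
  rw [← Hmat_mul_of_isUnit_det _ hC, hcols, Hmat_fromCols_of_orthogonal _ hB hAdB hBAd]
  · exact one_sub_add_eq_mul_of_mul_eq_zero (Hmat_mul_Hmat_eq_zero hAdB)
  · rw [hAd]
    exact isUnit_det_gram hW (injective_mulVec_sub_mul hinj K)

/-- the residual projection factors as
`I − H_X = (I − H_R̈)(I − H_S̈)(I − H_T)` where `X = [R S T]`, `S̈ = (I−H_T)S`, and
`R̈ = (I−H_S̈)(I−H_T)R`. -/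
theorem residual_projection_factorization
    {N r s t : ℕ}
    (W : Matrix (Fin N) (Fin N) ℝ) (hWpd : W.PosDef)
    (R : Matrix (Fin N) (Fin r) ℝ) (S : Matrix (Fin N) (Fin s) ℝ)
    (T : Matrix (Fin N) (Fin t) ℝ)
    (X : Matrix (Fin N) (Fin r ⊕ (Fin s ⊕ Fin t)) ℝ)
    (hX : X = Matrix.fromCols R (Matrix.fromCols S T))
    (hfullrank : IsUnit (Xᵀ * W * X).det)
    (Sd : Matrix (Fin N) (Fin s) ℝ) (hSd : Sd = (1 - Hmat W T) * S)
    (Rd : Matrix (Fin N) (Fin r) ℝ)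
    (hRd : Rd = (1 - Hmat W Sd) * ((1 - Hmat W T) * R)) :
    1 - Hmat W X = (1 - Hmat W Rd) * (1 - Hmat W Sd) * (1 - Hmat W T) := by
  have hXinj := injective_mulVec_of_isUnit_det_gram hfullrank
  subst hX hSd hRd
  have hST : 1 - Hmat W (fromCols S T) = (1 - Hmat W ((1 - Hmat W T) * S)) * (1 - Hmat W T) :=
    one_sub_Hmat_fromCols hWpd (injective_mulVec_fromCols_right hXinj)
  rw [one_sub_Hmat_fromCols hWpd hXinj, hST, Matrix.mul_assoc, Matrix.mul_assoc]
end

section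
/- Under the stated clustered-model assumptions with identity working model and identity weights (Φ = I and W = I), suppose the within-cluster fixed effects are nested (T_h T_k' = 0 for h ≠ k) and L_i = Ü'Ü − Ü_i'Ü_i is invertible for each i. Then the adjustment matrices A_i = (I_i − Ü_i (Ü'Ü)^{-1} Ü_i')^{+1/2} satisfy the CR2 criterion: R̈_i' A_i (I−H_X)_i (I−H_X)_i' A_i' R̈_i = R̈_i' R̈_i for every i. -/
open Matrix MeasureTheory

/-! With identity weights the Frisch–Waugh–Lovell decomposition gives `H_X = H_Ü + H_T`, so the
`i`-th diagonal block of `(I - H_X)(I - H_X)ᵀ = I - H_X` is `C_i - G_i` with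
`G_i = T_i (TᵀT)⁻¹ T_iᵀ`. Nesting makes `H_T` block diagonal, and since `ÜᵀT = 0` this forces
`Ü_iᵀ G_i = 0`; hence `G_i` is fixed by `C_i`, by `C_i⁺` and by its square root `A_i`, and it
annihilates `R̈_i = Ü_i K`. What remains is `R̈_iᵀ A_i C_i A_i R̈_i`. Now `A_i C_i A_i` is a
symmetric idempotent below the projector `C_i C_i⁺` with the same trace, so the two agree, and
invertibility of `L_i` puts `Ü_i`, hence `R̈_i`, in the range of `C_i`. -/

theorem fromCols_fromCols_eq_submatrix {Ω ρ σ τ : Type*} (R : Matrix Ω ρ ℝ) (S : Matrix Ω σ ℝ)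
    (T : Matrix Ω τ ℝ) :
    fromCols (fromCols R S) T =
      (fromCols R (fromCols S T)).submatrix id (Equiv.sumAssoc ρ σ τ) := by
  ext a ((b | b) | b) <;> rfl

section HatMatrix

variable {Ω κ κ' α β : Type*} [Fintype Ω] [Fintype κ] [DecidableEq κ] [Fintype κ']
  [DecidableEq κ'] [Fintype α] [DecidableEq α] [Fintype β] [DecidableEq β]

theorem mulVec_injective_of_isUnit_det_gram {Z : Matrix Ω κ ℝ} (hZ : IsUnit (Zᵀ * Z).det) :
    Function.Injective Z.mulVec := fun v w h => by
  simpa [mulVec_mulVec, Matrix.mul_assoc, nonsing_inv_mul _ hZ] using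
    congrArg (((Zᵀ * Z)⁻¹ * Zᵀ) *ᵥ ·) h

theorem isUnit_det_gram_of_mulVec_injective {Z : Matrix Ω κ ℝ}
    (hZ : Function.Injective Z.mulVec) : IsUnit (Zᵀ * Z).det := by
  simpa using (PosDef.conjTranspose_mul_self Z hZ).isUnit.map detMonoidHom

theorem isUnit_det_gram_mul {Z : Matrix Ω κ ℝ} (hZ : IsUnit (Zᵀ * Z).det)
    {K : Matrix κ κ' ℝ} {L : Matrix κ' κ ℝ} (hLK : L * K = 1) :
    IsUnit ((Z * K)ᵀ * (Z * K)).det := by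
  refine isUnit_det_gram_of_mulVec_injective fun v w h => ?_
  rw [← mulVec_mulVec, ← mulVec_mulVec] at h
  simpa [mulVec_mulVec, hLK] using congrArg (L *ᵥ ·) (mulVec_injective_of_isUnit_det_gram hZ h)

theorem isUnit_det_gram_submatrix_equiv {Z : Matrix Ω κ ℝ} (hZ : IsUnit (Zᵀ * Z).det)
    (e : κ' ≃ κ) : IsUnit ((Z.submatrix id e)ᵀ * Z.submatrix id e).det := by
  rwa [transpose_submatrix, ← submatrix_mul Zᵀ Z e id e Function.bijective_id,
    det_submatrix_equiv_self]

theorem isUnit_det_gram_fromCols_assoc {R : Matrix Ω α ℝ} {S : Matrix Ω β ℝ}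
    {T : Matrix Ω κ ℝ} (h : IsUnit ((fromCols R (fromCols S T))ᵀ * fromCols R (fromCols S T)).det) :
    IsUnit ((fromCols (fromCols R S) T)ᵀ * fromCols (fromCols R S) T).det := by
  rw [fromCols_fromCols_eq_submatrix]
  exact isUnit_det_gram_submatrix_equiv h _

theorem isUnit_det_gram_of_fromCols_right {A : Matrix Ω α ℝ} {B : Matrix Ω β ℝ}
    (h : IsUnit ((fromCols A B)ᵀ * fromCols A B).det) : IsUnit (Bᵀ * B).det := by
  have hB : fromCols A B * fromRows (0 : Matrix α β ℝ) (1 : Matrix β β ℝ) = B := by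
    rw [fromCols_mul_fromRows, Matrix.mul_zero, Matrix.mul_one, zero_add]
  rw [← hB]
  exact isUnit_det_gram_mul h (L := fromCols (0 : Matrix β α ℝ) 1) (by simp [fromCols_mul_fromRows])

variable [DecidableEq Ω]

theorem Hmat_one_eq (Z : Matrix Ω κ ℝ) : Hmat 1 Z = Z * (Zᵀ * Z)⁻¹ * Zᵀ := by
  simp only [Hmat, Mmat, Matrix.mul_one]

theorem Hmat_one_transpose (Z : Matrix Ω κ ℝ) : (Hmat 1 Z)ᵀ = Hmat 1 Z := by
  rw [Hmat_one_eq, transpose_mul, transpose_mul, transpose_transpose, transpose_nonsing_inv,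
    transpose_mul, transpose_transpose, Matrix.mul_assoc]

theorem Hmat_one_mul_self {Z : Matrix Ω κ ℝ} (hZ : IsUnit (Zᵀ * Z).det) :
    Hmat 1 Z * Z = Z := by
  rw [Hmat_one_eq, Matrix.mul_assoc, Matrix.mul_assoc Z, nonsing_inv_mul _ hZ, Matrix.mul_one]

theorem transpose_one_sub_Hmat_one_mul_mul_self {ι : Type*} {Z : Matrix Ω κ ℝ}
    (hZ : IsUnit (Zᵀ * Z).det) (Y : Matrix Ω ι ℝ) : ((1 - Hmat 1 Z) * Y)ᵀ * Z = 0 := by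
  rw [transpose_mul, Matrix.mul_assoc, transpose_sub, transpose_one, Hmat_one_transpose,
    Matrix.sub_mul, Matrix.one_mul, Hmat_one_mul_self hZ, sub_self, Matrix.mul_zero]

theorem Hmat_one_mul_Hmat_one {Z : Matrix Ω κ ℝ} (hZ : IsUnit (Zᵀ * Z).det) :
    Hmat 1 Z * Hmat 1 Z = Hmat 1 Z := by
  nth_rw 2 [Hmat_one_eq Z]
  rw [← Matrix.mul_assoc, ← Matrix.mul_assoc, Hmat_one_mul_self hZ, ← Hmat_one_eq]

theorem one_sub_Hmat_one_mul_transpose {Z : Matrix Ω κ ℝ} (hZ : IsUnit (Zᵀ * Z).det) :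
    (1 - Hmat 1 Z) * (1 - Hmat 1 Z)ᵀ = 1 - Hmat 1 Z := by
  rw [transpose_sub, transpose_one, Hmat_one_transpose, Matrix.sub_mul, Matrix.mul_sub,
    Matrix.mul_sub, Hmat_one_mul_Hmat_one hZ, Matrix.one_mul, Matrix.mul_one, Matrix.one_mul]
  abel

theorem Hmat_one_mul_of_isUnit_det (Z : Matrix Ω κ ℝ) {K : Matrix κ κ ℝ} (hK : IsUnit K.det) :
    Hmat 1 (Z * K) = Hmat 1 Z := by
  have hKt : IsUnit Kᵀ.det := by rwa [det_transpose]
  have hgram : (Z * K)ᵀ * (Z * K) = Kᵀ * (Zᵀ * Z) * K := by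
    simp only [transpose_mul, Matrix.mul_assoc]
  rw [Hmat_one_eq, Hmat_one_eq, hgram, Matrix.mul_inv_rev, Matrix.mul_inv_rev, transpose_mul]
  calc Z * K * (K⁻¹ * ((Zᵀ * Z)⁻¹ * Kᵀ⁻¹)) * (Kᵀ * Zᵀ)
      = Z * (K * K⁻¹) * (Zᵀ * Z)⁻¹ * (Kᵀ⁻¹ * Kᵀ) * Zᵀ := by simp only [Matrix.mul_assoc]
    _ = Z * (Zᵀ * Z)⁻¹ * Zᵀ := by
      rw [mul_nonsing_inv _ hK, nonsing_inv_mul _ hKt, Matrix.mul_one, Matrix.mul_one]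

theorem Hmat_one_submatrix_equiv (Z : Matrix Ω κ ℝ) (e : κ' ≃ κ) :
    Hmat 1 (Z.submatrix id e) = Hmat 1 Z := by
  rw [Hmat_one_eq, Hmat_one_eq, transpose_submatrix,
    ← submatrix_mul Zᵀ Z e id e Function.bijective_id, inv_submatrix_equiv,
    submatrix_mul_equiv, submatrix_mul_equiv, submatrix_id_id]

theorem Hmat_one_fromCols_of_transpose_mul_eq_zero {A : Matrix Ω α ℝ} {B : Matrix Ω β ℝ}
    (hA : IsUnit (Aᵀ * A).det) (hB : IsUnit (Bᵀ * B).det) (hAB : Aᵀ * B = 0) :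
    Hmat 1 (fromCols A B) = Hmat 1 A + Hmat 1 B := by
  have hBA : Bᵀ * A = 0 := by simpa using congrArg transpose hAB
  have hgram : (fromCols A B)ᵀ * fromCols A B = fromBlocks (Aᵀ * A) 0 0 (Bᵀ * B) := by
    rw [transpose_fromCols, fromRows_mul_fromCols, hAB, hBA]
  have hunits : IsUnit (Aᵀ * A) ↔ IsUnit (Bᵀ * B) := by
    simp only [isUnit_iff_isUnit_det, hA, hB]
  rw [Hmat_one_eq, hgram, inv_fromBlocks_zero₁₂_of_isUnit_iff _ _ _ hunits, transpose_fromCols,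
    fromCols_mul_fromBlocks, fromCols_mul_fromRows, Hmat_one_eq, Hmat_one_eq]
  simp

theorem one_sub_Hmat_one_mul_eq {ι : Type*} (Z : Matrix Ω κ ℝ) (Y : Matrix Ω ι ℝ) :
    (1 - Hmat 1 Z) * Y = Y - Z * ((Zᵀ * Z)⁻¹ * (Zᵀ * Y)) := by
  rw [Matrix.sub_mul, Matrix.one_mul, Hmat_one_eq]
  simp only [Matrix.mul_assoc]

theorem one_sub_Hmat_one_mul_eq_fromCols_mul (A : Matrix Ω α ℝ) (B : Matrix Ω β ℝ) :
    (1 - Hmat 1 B) * A =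
      fromCols A B * fromRows (1 : Matrix α α ℝ) (-((Bᵀ * B)⁻¹ * (Bᵀ * A))) := by
  rw [one_sub_Hmat_one_mul_eq, fromCols_mul_fromRows]
  simp [sub_eq_add_neg]

theorem fromCols_one_sub_Hmat_one_mul (A : Matrix Ω α ℝ) (B : Matrix Ω β ℝ) :
    fromCols ((1 - Hmat 1 B) * A) B =
      fromCols A B * fromBlocks (1 : Matrix α α ℝ) 0 (-((Bᵀ * B)⁻¹ * (Bᵀ * A))) 1 := by
  rw [fromCols_mul_fromBlocks, one_sub_Hmat_one_mul_eq]
  simp [sub_eq_add_neg]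

theorem isUnit_det_gram_one_sub_Hmat_one_mul {A : Matrix Ω α ℝ} {B : Matrix Ω β ℝ}
    (h : IsUnit ((fromCols A B)ᵀ * fromCols A B).det) :
    IsUnit (((1 - Hmat 1 B) * A)ᵀ * ((1 - Hmat 1 B) * A)).det := by
  rw [one_sub_Hmat_one_mul_eq_fromCols_mul]
  exact isUnit_det_gram_mul h (L := fromCols (1 : Matrix α α ℝ) 0) (by simp [fromCols_mul_fromRows])

theorem Hmat_one_fromCols {A : Matrix Ω α ℝ} {B : Matrix Ω β ℝ}
    (h : IsUnit ((fromCols A B)ᵀ * fromCols A B).det) :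
    Hmat 1 (fromCols A B) = Hmat 1 ((1 - Hmat 1 B) * A) + Hmat 1 B := by
  have hB := isUnit_det_gram_of_fromCols_right h
  have hK : IsUnit (fromBlocks (1 : Matrix α α ℝ) 0 (-((Bᵀ * B)⁻¹ * (Bᵀ * A))) 1).det := by
    simp
  rw [← Hmat_one_mul_of_isUnit_det _ hK, ← fromCols_one_sub_Hmat_one_mul,
    Hmat_one_fromCols_of_transpose_mul_eq_zero (isUnit_det_gram_one_sub_Hmat_one_mul h) hB
    (transpose_one_sub_Hmat_one_mul_mul_self hB A)]

theorem Hmat_one_fromCols_fromCols {R : Matrix Ω α ℝ} {S : Matrix Ω β ℝ} {T : Matrix Ω κ ℝ}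
    (h : IsUnit ((fromCols R (fromCols S T))ᵀ * fromCols R (fromCols S T)).det) :
    Hmat 1 (fromCols R (fromCols S T)) = Hmat 1 ((1 - Hmat 1 T) * fromCols R S) + Hmat 1 T := by
  rw [← Hmat_one_submatrix_equiv _ (Equiv.sumAssoc α β κ), ← fromCols_fromCols_eq_submatrix,
    Hmat_one_fromCols (isUnit_det_gram_fromCols_assoc h)]

end HatMatrix

section PseudoInverseSqrt

variable {p q : Type*} [Fintype p]

theorem mul_pinv_comm {C Cp : Matrix p p ℝ} (hCs : Cᵀ = C) (hCps : Cpᵀ = Cp)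
    (hCp3 : (C * Cp)ᵀ = C * Cp) : Cp * C = C * Cp := by
  simpa only [transpose_mul, hCps, hCs] using hCp3

variable [DecidableEq p]

theorem Matrix.PosSemidef.mul_eq_of_mul_self_mul_eq {A : Matrix p p ℝ} (hA : A.PosSemidef)
    {B : Matrix p q ℝ} (h : A * A * B = B) : A * B = B := by
  have hunit : IsUnit (A + 1).det := (PosDef.posSemidef_add hA PosDef.one).det_pos.ne'.isUnit
  have hker : (A + 1) * (A * B - B) = 0 := by
    rw [Matrix.add_mul, Matrix.one_mul, Matrix.mul_sub, ← Matrix.mul_assoc, h]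
    abel
  rw [← sub_eq_zero]
  calc A * B - B = (A + 1)⁻¹ * ((A + 1) * (A * B - B)) := by
        rw [← Matrix.mul_assoc, nonsing_inv_mul _ hunit, Matrix.one_mul]
    _ = 0 := by rw [hker, Matrix.mul_zero]

theorem mul_mul_eq_mul_pinv {C Cp A : Matrix p p ℝ} (hCs : Cᵀ = C) (hCp1 : C * Cp * C = C)
    (hCp2 : Cp * C * Cp = Cp) (hCp3 : (C * Cp)ᵀ = C * Cp) (hA : A.PosSemidef)
    (hAA : A * A = Cp) : A * C * A = C * Cp := by
  have hAt : Aᵀ = A := (isHermitian_iff_isSymm.1 hA.1).eq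
  have hQCp : C * Cp * Cp = Cp := by
    rw [← mul_pinv_comm hCs (by rw [← hAA, transpose_mul, hAt]) hCp3, hCp2]
  -- `(1 - C Cp) A = 0` because `(1 - C Cp) A Aᵀ = (1 - C Cp) Cp = 0`
  have hQA : C * Cp * A = A := by
    have h : (1 - C * Cp) * (A * Aᴴ) = 0 := by
      rw [conjTranspose_eq_transpose_of_trivial, hAt, hAA, Matrix.sub_mul, Matrix.one_mul, hQCp,
        sub_self]
    rw [mul_self_mul_conjTranspose_eq_zero, Matrix.sub_mul, Matrix.one_mul, sub_eq_zero] at h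
    exact h.symm
  have hQQ : C * Cp * (C * Cp) = C * Cp := by rw [← Matrix.mul_assoc, hCp1]
  have hPt : (A * C * A)ᵀ = A * C * A := by
    simp only [transpose_mul, hAt, hCs, Matrix.mul_assoc]
  have hPP : A * C * A * (A * C * A) = A * C * A := by
    calc A * C * A * (A * C * A) = A * (C * (A * A) * C) * A := by simp only [Matrix.mul_assoc]
      _ = A * C * A := by rw [hAA, hCp1, Matrix.mul_assoc]
  have hQP : C * Cp * (A * C * A) = A * C * A := by
    rw [← Matrix.mul_assoc, ← Matrix.mul_assoc, hQA]
  have hPQ : A * C * A * (C * Cp) = A * C * A := by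
    simpa only [transpose_mul, hPt, hCp3] using congrArg transpose hQP
  have htrace : (C * Cp - A * C * A).trace = 0 := by
    rw [trace_sub, trace_mul_comm (A * C), ← Matrix.mul_assoc, hAA, trace_mul_comm, sub_self]
  -- a symmetric idempotent of trace zero vanishes
  have hE : (C * Cp - A * C * A)ᴴ * (C * Cp - A * C * A) = C * Cp - A * C * A := by
    rw [conjTranspose_eq_transpose_of_trivial, transpose_sub, hCp3, hPt, Matrix.sub_mul,
      Matrix.mul_sub, Matrix.mul_sub, hQQ, hQP, hPQ, hPP]
    abel
  rw [← hE, trace_conjTranspose_mul_self_eq_zero_iff, sub_eq_zero] at htrace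
  exact htrace.symm

theorem cr2_identity {C Cp A G : Matrix p p ℝ} {R Y : Matrix p q ℝ} (hCs : Cᵀ = C)
    (hCp1 : C * Cp * C = C) (hCp2 : Cp * C * Cp = Cp) (hCp3 : (C * Cp)ᵀ = C * Cp)
    (hA : A.PosSemidef) (hAA : A * A = Cp) (hGs : Gᵀ = G) (hCG : C * G = G) (hRG : Rᵀ * G = 0)
    (hR : R = C * Y) :
    Rᵀ * A * (C - G) * Aᵀ * R = Rᵀ * R := by
  have hAt : Aᵀ = A := (isHermitian_iff_isSymm.1 hA.1).eq
  have hCpG : Cp * G = G := by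
    calc Cp * G = C * Cp * (C * G) := by
          rw [hCG, ← mul_pinv_comm hCs (by rw [← hAA, transpose_mul, hAt]) hCp3,
            Matrix.mul_assoc, hCG]
      _ = G := by rw [← Matrix.mul_assoc, hCp1, hCG]
  have hAG : A * G = G := hA.mul_eq_of_mul_self_mul_eq (by rw [hAA, hCpG])
  have hGA : G * A = G := by simpa only [transpose_mul, hAt, hGs] using congrArg transpose hAG
  have hQR : C * Cp * R = R := by rw [hR, ← Matrix.mul_assoc, hCp1]
  calc Rᵀ * A * (C - G) * Aᵀ * R = Rᵀ * (A * C * A) * R - Rᵀ * ((A * G) * A) * R := by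
        simp only [hAt, Matrix.mul_sub, Matrix.sub_mul, Matrix.mul_assoc]
    _ = Rᵀ * R := by
        rw [mul_mul_eq_mul_pinv hCs hCp1 hCp2 hCp3 hA hAA, hAG, hGA, Matrix.mul_assoc,
          hQR, hRG, Matrix.zero_mul, sub_zero]

end PseudoInverseSqrt

section Clusters

variable {m : ℕ} {n : Fin m → ℕ} {c d : Type*}

theorem cRows_mul [Fintype c] (i : Fin m) (M : Matrix (Obs n) c ℝ) (N : Matrix c d ℝ) :
    cRows i (M * N) = cRows i M * N :=
  rfl

theorem cRows_mul_transpose_cRows [Fintype c] (j k : Fin m) (M N : Matrix (Obs n) c ℝ) :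
    cRows j M * (cRows k N)ᵀ = (M * Nᵀ).submatrix (Sigma.mk j) (Sigma.mk k) :=
  rfl

theorem transpose_mul_eq_sum_cRows [Fintype d] (M : Matrix (Obs n) c ℝ)
    (N : Matrix (Obs n) d ℝ) : Mᵀ * N = ∑ l, (cRows l M)ᵀ * cRows l N := by
  ext a b
  simp only [Matrix.sum_apply, mul_apply, Fintype.sum_sigma, cRows, transpose_apply, of_apply]

theorem Hmat_one_submatrix_sigma_mk [Fintype c] [DecidableEq c] (Z : Matrix (Obs n) c ℝ)
    (j k : Fin m) :
    (Hmat 1 Z).submatrix (Sigma.mk j) (Sigma.mk k) = cRows j Z * (Zᵀ * Z)⁻¹ * (cRows k Z)ᵀ := by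
  rw [Hmat_one_eq, ← cRows_mul_transpose_cRows, cRows_mul]

theorem one_sub_Hmat_one_submatrix_sigma_mk [Fintype c] [DecidableEq c] (Z : Matrix (Obs n) c ℝ)
    (i : Fin m) :
    (1 - Hmat 1 Z).submatrix (Sigma.mk i) (Sigma.mk i) =
      1 - cRows i Z * (Zᵀ * Z)⁻¹ * (cRows i Z)ᵀ := by
  rw [submatrix_sub, Pi.sub_apply, Pi.sub_apply, submatrix_one _ sigma_mk_injective,
    Hmat_one_submatrix_sigma_mk]

theorem exists_cRows_eq_one_sub_mul [Fintype c] [DecidableEq c] {Z : Matrix (Obs n) c ℝ}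
    (hZ : IsUnit (Zᵀ * Z).det) {i : Fin m}
    (hL : IsUnit (Zᵀ * Z - (cRows i Z)ᵀ * cRows i Z).det) :
    ∃ Y : Matrix (Fin (n i)) c ℝ, cRows i Z = (1 - cRows i Z * (Zᵀ * Z)⁻¹ * (cRows i Z)ᵀ) * Y := by
  have hCZ : (1 - cRows i Z * (Zᵀ * Z)⁻¹ * (cRows i Z)ᵀ) * cRows i Z =
      cRows i Z * ((Zᵀ * Z)⁻¹ * (Zᵀ * Z - (cRows i Z)ᵀ * cRows i Z)) := by
    rw [Matrix.mul_sub (Zᵀ * Z)⁻¹, nonsing_inv_mul _ hZ, Matrix.mul_sub, Matrix.sub_mul,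
      Matrix.mul_one, Matrix.one_mul]
    simp only [Matrix.mul_assoc]
  refine ⟨cRows i Z * ((Zᵀ * Z - (cRows i Z)ᵀ * cRows i Z)⁻¹ * (Zᵀ * Z)), ?_⟩
  rw [← Matrix.mul_assoc, hCZ]
  simp only [Matrix.mul_assoc, mul_nonsing_inv_cancel_left (A := Zᵀ * Z - _) _ hL,
    nonsing_inv_mul _ hZ, Matrix.mul_one]

theorem Hmat_one_submatrix_sigma_mk_eq_zero [Fintype c] [DecidableEq c] {T : Matrix (Obs n) c ℝ}
    (hT : IsUnit (Tᵀ * T).det) (hnested : ∀ h k : Fin m, h ≠ k → cRows h T * (cRows k T)ᵀ = 0)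
    {j k : Fin m} (hjk : j ≠ k) : (Hmat 1 T).submatrix (Sigma.mk j) (Sigma.mk k) = 0 := by
  rw [Hmat_one_submatrix_sigma_mk]
  -- `F = T_j (TᵀT)⁻¹ T_kᵀ` satisfies `F T_k T_kᵀ = T_j T_kᵀ = 0`, hence `F T_k = 0` and `F Fᵀ = 0`
  have hgram : Tᵀ * T * (cRows k T)ᵀ = (cRows k T)ᵀ * (cRows k T * (cRows k T)ᵀ) := by
    rw [transpose_mul_eq_sum_cRows, Matrix.sum_mul, Finset.sum_eq_single k, Matrix.mul_assoc]
    · intro l _ hlk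
      rw [Matrix.mul_assoc, hnested l k hlk, Matrix.mul_zero]
    · simp
  have hF : cRows j T * (Tᵀ * T)⁻¹ * (cRows k T)ᵀ * (cRows k T * (cRows k T)ᵀ) = 0 := by
    calc _ = cRows j T * ((Tᵀ * T)⁻¹ * (Tᵀ * T) * (cRows k T)ᵀ) := by
          rw [Matrix.mul_assoc _ (Tᵀ * T), hgram]; simp only [Matrix.mul_assoc]
      _ = 0 := by rw [nonsing_inv_mul _ hT, Matrix.one_mul, hnested j k hjk]
  have hFT : cRows j T * (Tᵀ * T)⁻¹ * (cRows k T)ᵀ * cRows k T = 0 := by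
    rwa [← mul_self_mul_conjTranspose_eq_zero, conjTranspose_eq_transpose_of_trivial]
  rw [← self_mul_conjTranspose_eq_zero, conjTranspose_eq_transpose_of_trivial, transpose_mul,
    transpose_transpose, ← Matrix.mul_assoc, hFT, Matrix.zero_mul]

theorem transpose_cRows_mul_submatrix_sigma_mk_eq_zero [Fintype c] {Z : Matrix (Obs n) c ℝ}
    {H : Matrix (Obs n) (Obs n) ℝ}
    (hH : ∀ j k : Fin m, j ≠ k → H.submatrix (Sigma.mk j) (Sigma.mk k) = 0) (hZH : Zᵀ * H = 0)
    (i : Fin m) : (cRows i Z)ᵀ * H.submatrix (Sigma.mk i) (Sigma.mk i) = 0 := by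
  have h : Zᵀ * H.submatrix id (Sigma.mk i) = 0 := congrArg (·.submatrix id (Sigma.mk i)) hZH
  rw [transpose_mul_eq_sum_cRows, Finset.sum_eq_single i] at h
  · exact h
  · intro l _ hli
    exact (congrArg _ (hH l i hli)).trans (Matrix.mul_zero _)
  · simp

theorem transpose_cRows_mul_Hmat_one_submatrix_eq_zero [Fintype c] [Fintype d] [DecidableEq d]
    {T : Matrix (Obs n) d ℝ} {Z : Matrix (Obs n) c ℝ}
    (hT : IsUnit (Tᵀ * T).det) (hnested : ∀ h k : Fin m, h ≠ k → cRows h T * (cRows k T)ᵀ = 0)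
    (hZT : Zᵀ * T = 0) (i : Fin m) :
    (cRows i Z)ᵀ * (Hmat 1 T).submatrix (Sigma.mk i) (Sigma.mk i) = 0 := by
  refine transpose_cRows_mul_submatrix_sigma_mk_eq_zero
    (fun j k => Hmat_one_submatrix_sigma_mk_eq_zero hT hnested) ?_ i
  rw [Hmat_one_eq, ← Matrix.mul_assoc, ← Matrix.mul_assoc, hZT, Matrix.zero_mul, Matrix.zero_mul]

end Clusters

theorem cr2_criterion_identity_weights_general
    {m r s t : ℕ} {n : Fin m → ℕ}
    (R : Matrix (Obs n) (Fin r) ℝ) (S : Matrix (Obs n) (Fin s) ℝ)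
    (T : Matrix (Obs n) (Fin t) ℝ)
    (X : Matrix (Obs n) (Fin r ⊕ (Fin s ⊕ Fin t)) ℝ)
    (hX : X = Matrix.fromCols R (Matrix.fromCols S T))
    (U : Matrix (Obs n) (Fin r ⊕ Fin s) ℝ) (hU : U = Matrix.fromCols R S)
    (hfullrank : IsUnit (Xᵀ * X).det)
    (hnested : ∀ h k : Fin m, h ≠ k → cRows h T * (cRows k T)ᵀ = 0)
    -- absorbed matrices, with identity weights
    (Sd : Matrix (Obs n) (Fin s) ℝ) (hSd : Sd = (1 - Hmat 1 T) * S)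
    (Rd : Matrix (Obs n) (Fin r) ℝ)
    (hRd : Rd = (1 - Hmat 1 Sd) * ((1 - Hmat 1 T) * R))
    (Ud : Matrix (Obs n) (Fin r ⊕ Fin s) ℝ) (hUd : Ud = (1 - Hmat 1 T) * U)
    (hL : ∀ i : Fin m, IsUnit (Udᵀ * Ud - (cRows i Ud)ᵀ * cRows i Ud).det)
    -- C_i = I − Ü_i (ÜᵀÜ)⁻¹ Ü_iᵀ, with Moore–Penrose inverse Cp i
    (C : ∀ i : Fin m, Matrix (Fin (n i)) (Fin (n i)) ℝ)
    (hC : ∀ i, C i = 1 - cRows i Ud * (Udᵀ * Ud)⁻¹ * (cRows i Ud)ᵀ)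
    (Cp : ∀ i : Fin m, Matrix (Fin (n i)) (Fin (n i)) ℝ)
    (hCp1 : ∀ i, C i * Cp i * C i = C i)
    (hCp2 : ∀ i, Cp i * C i * Cp i = Cp i)
    (hCp3 : ∀ i, (C i * Cp i)ᵀ = C i * Cp i)
    -- A_i = C_i^{+1/2}, the symmetric psd square root of Cp i
    (A : ∀ i : Fin m, Matrix (Fin (n i)) (Fin (n i)) ℝ)
    (hA1 : ∀ i, (A i).PosSemidef)
    (hA2 : ∀ i, A i * A i = Cp i) :
    ∀ i : Fin m,
      (cRows i Rd)ᵀ * A i * cRows i (1 - Hmat 1 X) *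
          (cRows i (1 - Hmat 1 X))ᵀ * (A i)ᵀ * cRows i Rd
        = (cRows i Rd)ᵀ * cRows i Rd := by
  intro i
  have hXgram : IsUnit ((fromCols R (fromCols S T))ᵀ * fromCols R (fromCols S T)).det :=
    hX ▸ hfullrank
  have hgram : IsUnit ((fromCols U T)ᵀ * fromCols U T).det :=
    hU ▸ isUnit_det_gram_fromCols_assoc hXgram
  have hT := isUnit_det_gram_of_fromCols_right hgram
  have hHX : Hmat 1 X = Hmat 1 Ud + Hmat 1 T := by
    rw [hX, Hmat_one_fromCols_fromCols hXgram, ← hU, ← hUd]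
  obtain ⟨K, hRdK⟩ : ∃ K : Matrix (Fin r ⊕ Fin s) (Fin r) ℝ, Rd = Ud * K :=
    ⟨_, by rw [hRd, one_sub_Hmat_one_mul_eq_fromCols_mul, hUd, hU, mul_fromCols, ← hSd]⟩
  obtain ⟨Y, hY⟩ :=
    exists_cRows_eq_one_sub_mul (hUd ▸ isUnit_det_gram_one_sub_Hmat_one_mul hgram) (hL i)
  rw [← hC i] at hY
  set G := (Hmat 1 T).submatrix (Sigma.mk i) (Sigma.mk i) with hG
  have hUdG : (cRows i Ud)ᵀ * G = 0 := transpose_cRows_mul_Hmat_one_submatrix_eq_zero hT hnested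
    (hUd ▸ transpose_one_sub_Hmat_one_mul_mul_self hT U) i
  have hC' : C i = (1 - Hmat 1 Ud).submatrix (Sigma.mk i) (Sigma.mk i) :=
    (hC i).trans (one_sub_Hmat_one_submatrix_sigma_mk Ud i).symm
  have hblock : cRows i (1 - Hmat 1 X) * (cRows i (1 - Hmat 1 X))ᵀ = C i - G := by
    rw [cRows_mul_transpose_cRows, one_sub_Hmat_one_mul_transpose hfullrank, hHX,
      sub_add_eq_sub_sub, submatrix_sub, Pi.sub_apply, Pi.sub_apply, ← hC']
  have hCs : (C i)ᵀ = C i := by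
    rw [hC', transpose_submatrix, transpose_sub, transpose_one, Hmat_one_transpose]
  have hGs : Gᵀ = G := by rw [hG, transpose_submatrix, Hmat_one_transpose]
  have hCG : C i * G = G := by
    rw [hC i, Matrix.sub_mul, Matrix.one_mul, Matrix.mul_assoc, hUdG, Matrix.mul_zero, sub_zero]
  have hRdG : (cRows i Rd)ᵀ * G = 0 := by
    rw [hRdK, cRows_mul, transpose_mul, Matrix.mul_assoc, hUdG, Matrix.mul_zero]
  have hR : cRows i Rd = C i * (Y * K) := by rw [hRdK, cRows_mul, hY, Matrix.mul_assoc]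
  have h := cr2_identity hCs (hCp1 i) (hCp2 i) (hCp3 i) (hA1 i) (hA2 i) hGs hCG hRdG hR
  rw [← hblock] at h
  simpa only [Matrix.mul_assoc] using h

/-- with identity working model and identity weights (`Φ = I`, `W = I`),
nested within-cluster fixed effects, and `L_i = ÜᵀÜ − Ü_iᵀÜ_i` invertible, the adjustment
matrices `A_i = (I − Ü_i (ÜᵀÜ)⁻¹ Ü_iᵀ)^{+1/2}` satisfy the CR2 criterion
`R̈_iᵀ A_i (I−H_X)_i (I−H_X)_iᵀ A_iᵀ R̈_i = R̈_iᵀ R̈_i`. -/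
theorem cr2_criterion_identity_weights
    {m r s t : ℕ} {n : Fin m → ℕ}
    (R : Matrix (Obs n) (Fin r) ℝ) (S : Matrix (Obs n) (Fin s) ℝ)
    (T : Matrix (Obs n) (Fin t) ℝ)
    (X : Matrix (Obs n) (Fin r ⊕ (Fin s ⊕ Fin t)) ℝ)
    (hX : X = Matrix.fromCols R (Matrix.fromCols S T))
    (U : Matrix (Obs n) (Fin r ⊕ Fin s) ℝ) (hU : U = Matrix.fromCols R S)
    (hfullrank : IsUnit (Xᵀ * X).det)
    (hnested : ∀ h k : Fin m, h ≠ k → cRows h T * (cRows k T)ᵀ = 0)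
    -- absorbed matrices, with identity weights
    (Sd : Matrix (Obs n) (Fin s) ℝ) (hSd : Sd = (1 - Hmat 1 T) * S)
    (Rd : Matrix (Obs n) (Fin r) ℝ)
    (hRd : Rd = (1 - Hmat 1 Sd) * ((1 - Hmat 1 T) * R))
    (Ud : Matrix (Obs n) (Fin r ⊕ Fin s) ℝ) (hUd : Ud = (1 - Hmat 1 T) * U)
    (hL : ∀ i : Fin m, IsUnit (Udᵀ * Ud - (cRows i Ud)ᵀ * cRows i Ud).det)
    -- C_i = I − Ü_i (ÜᵀÜ)⁻¹ Ü_iᵀ, with Moore–Penrose inverse Cp i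
    (C : ∀ i : Fin m, Matrix (Fin (n i)) (Fin (n i)) ℝ)
    (hC : ∀ i, C i = 1 - cRows i Ud * (Udᵀ * Ud)⁻¹ * (cRows i Ud)ᵀ)
    (Cp : ∀ i : Fin m, Matrix (Fin (n i)) (Fin (n i)) ℝ)
    (hCp1 : ∀ i, C i * Cp i * C i = C i)
    (hCp2 : ∀ i, Cp i * C i * Cp i = Cp i)
    (hCp3 : ∀ i, (C i * Cp i)ᵀ = C i * Cp i)
    (hCp4 : ∀ i, (Cp i * C i)ᵀ = Cp i * C i)
    -- A_i = C_i^{+1/2}, the symmetric psd square root of Cp i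
    (A : ∀ i : Fin m, Matrix (Fin (n i)) (Fin (n i)) ℝ)
    (hA1 : ∀ i, (A i).PosSemidef)
    (hA2 : ∀ i, A i * A i = Cp i) :
    ∀ i : Fin m,
      (cRows i Rd)ᵀ * A i * cRows i (1 - Hmat 1 X) *
          (cRows i (1 - Hmat 1 X))ᵀ * (A i)ᵀ * cRows i Rd
        = (cRows i Rd)ᵀ * cRows i Rd :=
  cr2_criterion_identity_weights_general R S T X hX U hU hfullrank hnested Sd hSd Rd hRd Ud hUd hL C
    hC Cp hCp1 hCp2 hCp3 A hA1 hA2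
end

section
/- Under the stated clustered-model assumptions, suppose the within-cluster fixed effects are nested (T_h T_k' = 0 for h ≠ k) and T has full column rank, with M_T = (T'WT)^{-1}. Then for every cluster i, T_i M_T (M_T − M_T T_i' W_i T_i M_T)^+ M_T T_i' = 0. -/
/-!
Write `A = TᵀWT` and `Aᵢ = TᵢᵀWᵢTᵢ`. Since `W` is block diagonal, `A = ∑ₖ Aₖ`, and nestedness
makes the `Aₖ` mutually orthogonal, so `A Aᵢ = Aᵢ² = Aᵢ A`. Hence `Aᵢ` commutes with `M = A⁻¹`
and `Aᵢ M Aᵢ = Aᵢ`, which gives `Aᵢ Eᵢ = 0` for `Eᵢ = M − M Aᵢ M`. The Moore–Penrose identities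
`G = G E G = G Gᵀ Eᵀ` then give `Gᵢ Aᵢ = 0`, so `(Gᵢ M Tᵢᵀ) Wᵢ (Gᵢ M Tᵢᵀ)ᵀ = Gᵢ Aᵢ M Mᵀ Gᵢᵀ = 0`,
and positive definiteness of `Wᵢ` forces `Gᵢ M Tᵢᵀ = 0`.
-/

open Matrix MeasureTheory

namespace Matrix

section CommRing

variable {R : Type*} [CommRing R] {l m n p : Type*} [Fintype l] [Fintype m] [Fintype n]

theorem transpose_mul_mul_mul_transpose_mul_mul_eq_zero {S : Matrix m n R} {U : Matrix l n R}
    (V : Matrix m m R) (V' : Matrix l l R) (h : S * Uᵀ = 0) :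
    Sᵀ * V * S * (Uᵀ * V' * U) = 0 := by
  rw [show Sᵀ * V * S * (Uᵀ * V' * U) = Sᵀ * V * (S * Uᵀ) * (V' * U) by
    simp only [Matrix.mul_assoc], h, Matrix.mul_zero, Matrix.zero_mul]

theorem mul_eq_zero_of_transpose_mul_eq_zero {E : Matrix m n R} {G : Matrix n m R}
    {B : Matrix m p R} (hGEG : G * E * G = G) (hEG : (E * G)ᵀ = E * G) (h : Eᵀ * B = 0) :
    G * B = 0 :=
  calc G * B = G * (E * G)ᵀ * B := by rw [hEG, ← Matrix.mul_assoc, hGEG]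
    _ = G * Gᵀ * (Eᵀ * B) := by simp only [transpose_mul, Matrix.mul_assoc]
    _ = 0 := by rw [h, Matrix.mul_zero]

variable [DecidableEq n]

theorem commute_nonsing_inv_left {A B : Matrix n n R} (h : Commute A B) : Commute A⁻¹ B := by
  by_cases hA : IsUnit A.det
  · have := h.units_inv_left (u := nonsingInvUnit A hA)
    rwa [coe_units_inv] at this
  · simp [nonsing_inv_apply_not_isUnit _ hA]

theorem mul_nonsing_inv_mul_eq_self {A B : Matrix n n R} (hA : IsUnit A.det)
    (hAB : A * B = B * B) (hBA : B * A = B * B) : B * A⁻¹ * B = B :=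
  calc B * A⁻¹ * B = A⁻¹ * (A * B) := by
        rw [← (commute_nonsing_inv_left (hAB.trans hBA.symm)).eq, hAB, Matrix.mul_assoc]
    _ = B := by rw [← Matrix.mul_assoc, nonsing_inv_mul _ hA, Matrix.one_mul]

end CommRing

namespace PosDef

variable {R : Type*} [Ring R] [PartialOrder R] [StarRing R] {m n p : Type*} [Fintype n]

theorem eq_zero_of_mul_mul_conjTranspose_eq_zero {W : Matrix n n R} (hW : W.PosDef)
    {X : Matrix m n R} (h : X * W * Xᴴ = 0) : X = 0 := by
  funext r
  by_contra hr
  have hpos := hW.dotProduct_mulVec_pos (star_ne_zero.mpr hr)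
  have hdiag : (X * W * Xᴴ) r r = star (star (X r)) ⬝ᵥ W *ᵥ star (X r) := by
    rw [Matrix.mul_assoc, mul_apply', star_star]; rfl
  rw [← hdiag, h] at hpos
  exact lt_irrefl _ hpos

theorem mul_conjTranspose_eq_zero [Fintype m] {W : Matrix n n R} (hW : W.PosDef)
    {P : Matrix p m R} {S : Matrix n m R} (h : P * (Sᴴ * W * S) = 0) : P * Sᴴ = 0 :=
  hW.eq_zero_of_mul_mul_conjTranspose_eq_zero <|
    calc P * Sᴴ * W * (P * Sᴴ)ᴴ = P * (Sᴴ * W * S) * Pᴴ := by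
          simp only [conjTranspose_mul, conjTranspose_conjTranspose, Matrix.mul_assoc]
      _ = 0 := by rw [h, Matrix.zero_mul]

end PosDef

end Matrix

section Clusters

variable {m : ℕ} {n : Fin m → ℕ} {c : Type*}
  (Wb : ∀ i, Matrix (Fin (n i)) (Fin (n i)) ℝ)

theorem transpose_mul_blockDiagonal'_mul (T : Matrix (Obs n) c ℝ) :
    Tᵀ * blockDiagonal' Wb * T = ∑ k, (cRows k T)ᵀ * Wb k * cRows k T := by
  ext a b
  simp [mul_apply, Matrix.sum_apply, blockDiagonal'_apply, cRows, Fintype.sum_sigma,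
    Finset.sum_mul]

theorem transpose_mul_blockDiagonal'_mul_mul_of_nested [Fintype c] {T : Matrix (Obs n) c ℝ}
    (hnested : ∀ h k : Fin m, h ≠ k → cRows h T * (cRows k T)ᵀ = 0) (i : Fin m) :
    Tᵀ * blockDiagonal' Wb * T * ((cRows i T)ᵀ * Wb i * cRows i T) =
      (cRows i T)ᵀ * Wb i * cRows i T * ((cRows i T)ᵀ * Wb i * cRows i T) := by
  rw [transpose_mul_blockDiagonal'_mul, Finset.sum_mul, Fintype.sum_eq_single i fun k hk =>
    transpose_mul_mul_mul_transpose_mul_mul_eq_zero _ _ (hnested k i hk)]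

theorem mul_transpose_mul_blockDiagonal'_mul_of_nested [Fintype c] {T : Matrix (Obs n) c ℝ}
    (hnested : ∀ h k : Fin m, h ≠ k → cRows h T * (cRows k T)ᵀ = 0) (i : Fin m) :
    (cRows i T)ᵀ * Wb i * cRows i T * (Tᵀ * blockDiagonal' Wb * T) =
      (cRows i T)ᵀ * Wb i * cRows i T * ((cRows i T)ᵀ * Wb i * cRows i T) := by
  rw [transpose_mul_blockDiagonal'_mul, Finset.mul_sum, Fintype.sum_eq_single i fun k hk =>
    transpose_mul_mul_mul_transpose_mul_mul_eq_zero _ _ (hnested i k (Ne.symm hk))]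

end Clusters

theorem nested_fixed_effects_pinv_vanishes_general
    {m t : ℕ} {n : Fin m → ℕ}
    (Wb : ∀ i : Fin m, Matrix (Fin (n i)) (Fin (n i)) ℝ)
    (hWpd : ∀ i, (Wb i).PosDef)
    (W : Matrix (Obs n) (Obs n) ℝ) (hW : W = Matrix.blockDiagonal' Wb)
    (T : Matrix (Obs n) (Fin t) ℝ)
    (hfullrank : IsUnit (Tᵀ * W * T).det)
    (hnested : ∀ h k : Fin m, h ≠ k → cRows h T * (cRows k T)ᵀ = 0)
    -- E_i = M_T − M_T T_iᵀ W_i T_i M_T and its Moore–Penrose inverse G i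
    (E : ∀ i : Fin m, Matrix (Fin t) (Fin t) ℝ)
    (hE : ∀ i, E i = Mmat W T - Mmat W T * (cRows i T)ᵀ * Wb i * cRows i T * Mmat W T)
    (G : ∀ i : Fin m, Matrix (Fin t) (Fin t) ℝ)
    (hG2 : ∀ i, G i * E i * G i = G i)
    (hG3 : ∀ i, (E i * G i)ᵀ = E i * G i) :
    ∀ i : Fin m, cRows i T * Mmat W T * G i * Mmat W T * (cRows i T)ᵀ = 0 := by
  intro i
  set Ai := (cRows i T)ᵀ * Wb i * cRows i T with hAi
  have hAAi : Tᵀ * W * T * Ai = Ai * Ai :=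
    hW ▸ transpose_mul_blockDiagonal'_mul_mul_of_nested Wb hnested i
  have hAiA : Ai * (Tᵀ * W * T) = Ai * Ai :=
    hW ▸ mul_transpose_mul_blockDiagonal'_mul_of_nested Wb hnested i
  have hAiMAi : Ai * Mmat W T * Ai = Ai := mul_nonsing_inv_mul_eq_self hfullrank hAAi hAiA
  have hEi : E i = Mmat W T - Mmat W T * Ai * Mmat W T := by
    rw [hE i]; simp only [hAi, Matrix.mul_assoc]
  have hAiE : Ai * E i = 0 := by
    rw [hEi, Matrix.mul_sub, ← Matrix.mul_assoc, ← Matrix.mul_assoc, hAiMAi, sub_self]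
  have hAiT : Aiᵀ = Ai := by
    have := (isHermitian_conjTranspose_mul_mul (cRows i T) (hWpd i).isHermitian).eq
    simpa only [conjTranspose_eq_transpose_of_trivial] using this
  have hGAi : G i * Ai = 0 := mul_eq_zero_of_transpose_mul_eq_zero (hG2 i) (hG3 i) <| by
    rw [← hAiT, ← transpose_mul, hAiE, transpose_zero]
  have hMAi : Commute (Mmat W T) Ai := commute_nonsing_inv_left (hAAi.trans hAiA.symm)
  have hGMAi : G i * Mmat W T * Ai = 0 := by
    rw [Matrix.mul_assoc, hMAi.eq, ← Matrix.mul_assoc, hGAi, Matrix.zero_mul]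
  have hGMTi : G i * Mmat W T * (cRows i T)ᵀ = 0 := by
    have := (hWpd i).mul_conjTranspose_eq_zero (P := G i * Mmat W T) (S := cRows i T)
    simp only [conjTranspose_eq_transpose_of_trivial] at this
    exact this hGMAi
  calc _ = cRows i T * Mmat W T * (G i * Mmat W T * (cRows i T)ᵀ) := by
        simp only [Matrix.mul_assoc]
    _ = 0 := by rw [hGMTi, Matrix.mul_zero]

/-- with nested within-cluster fixed effects `T` of full column rank,
`T_i M_T (M_T − M_T T_iᵀ W_i T_i M_T)⁺ M_T T_iᵀ = 0` for every cluster `i`. -/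
theorem nested_fixed_effects_pinv_vanishes
    {m t : ℕ} {n : Fin m → ℕ}
    (Wb : ∀ i : Fin m, Matrix (Fin (n i)) (Fin (n i)) ℝ)
    (hWpd : ∀ i, (Wb i).PosDef)
    (W : Matrix (Obs n) (Obs n) ℝ) (hW : W = Matrix.blockDiagonal' Wb)
    (T : Matrix (Obs n) (Fin t) ℝ)
    (hfullrank : IsUnit (Tᵀ * W * T).det)
    (hnested : ∀ h k : Fin m, h ≠ k → cRows h T * (cRows k T)ᵀ = 0)
    -- E_i = M_T − M_T T_iᵀ W_i T_i M_T and its Moore–Penrose inverse G i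
    (E : ∀ i : Fin m, Matrix (Fin t) (Fin t) ℝ)
    (hE : ∀ i, E i = Mmat W T - Mmat W T * (cRows i T)ᵀ * Wb i * cRows i T * Mmat W T)
    (G : ∀ i : Fin m, Matrix (Fin t) (Fin t) ℝ)
    (hG1 : ∀ i, E i * G i * E i = E i)
    (hG2 : ∀ i, G i * E i * G i = G i)
    (hG3 : ∀ i, (E i * G i)ᵀ = E i * G i)
    (hG4 : ∀ i, (G i * E i)ᵀ = G i * E i) :
    ∀ i : Fin m, cRows i T * Mmat W T * G i * Mmat W T * (cRows i T)ᵀ = 0 :=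
  nested_fixed_effects_pinv_vanishes_general Wb hWpd W hW T hfullrank hnested E hE G hG2 hG3
end
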